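/- arXiv:1401.1408 — 2 statements merged into one kernel-verified Lean document; each statement's English description precedes it below -/
import Mathlib

section
/- Let q_k and μ_k be the coefficient sequences of F₁(t;x) = exp(-4t³/3+tx) and F₂(t;x) = exp(-t³/3+tx) (with q_k ≡ 0 for k < 0). Then for all k ≥ 0: 2^{k-1} μ_k(x) + δ_{k0}/2 = ∑_{m=0}^{k} q_{k-2m}(x) q_{2m}(x). -/
/-!
Squaring the generating function gives `F₁(t)² = F₂(2t)`, while `F₁(-t) F₁(t) = 1`.
Comparing `k`-th Taylor coefficients, `∑ⱼ q_j q_{k-j} = 2ᵏ μ_k` and `∑ⱼ (-1)ʲ q_j q_{k-j} = δ_{k0}`;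
adding the two kills the odd `j` and doubles the even ones.
-/

open Complex

/-- `q_k(x)`: the `k`-th Taylor coefficient in `t` of `F₁(t;x) = exp(-4t³/3 + t·x)`. -/
noncomputable def qpoly (k : ℕ) (x : ℂ) : ℂ :=
  iteratedDeriv k (fun t : ℂ => Complex.exp (-4 * t ^ 3 / 3 + t * x)) 0 / (Nat.factorial k)

/-- `q_k` extended to integer indices by `q_k ≡ 0` for `k < 0`. -/
noncomputable def qz (k : ℤ) (x : ℂ) : ℂ := if 0 ≤ k then qpoly k.toNat x else 0

/-- `μ_k(x)`: the `k`-th Taylor coefficient in `t` of `F₂(t;x) = exp(-t³/3 + t·x)`. -/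
noncomputable def mu (k : ℕ) (x : ℂ) : ℂ :=
  iteratedDeriv k (fun t : ℂ => Complex.exp (-t ^ 3 / 3 + t * x)) 0 / (Nat.factorial k)

open Finset

noncomputable section

section TaylorCoeff

variable {𝕜 : Type*} [NontriviallyNormedField 𝕜]

def taylorCoeff (f : 𝕜 → 𝕜) (a : 𝕜) (n : ℕ) : 𝕜 :=
  iteratedDeriv n f a / n.factorial

theorem taylorCoeff_const (c a : 𝕜) (n : ℕ) :
    taylorCoeff (fun _ => c) a n = if n = 0 then c else 0 := by
  rcases n with _ | n <;> simp [taylorCoeff, iteratedDeriv_const]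

theorem taylorCoeff_comp_const_mul {f : 𝕜 → 𝕜} {n : ℕ} (hf : ContDiff 𝕜 n f) (c a : 𝕜) :
    taylorCoeff (fun x => f (c * x)) a n = c ^ n * taylorCoeff f (c * a) n := by
  simp only [taylorCoeff, iteratedDeriv_comp_const_mul hf, mul_div_assoc]

theorem taylorCoeff_mul [CharZero 𝕜] {f g : 𝕜 → 𝕜} {a : 𝕜} {n : ℕ}
    (hf : ContDiffAt 𝕜 n f a) (hg : ContDiffAt 𝕜 n g a) :
    taylorCoeff (f * g) a n =
      ∑ i ∈ range (n + 1), taylorCoeff f a i * taylorCoeff g a (n - i) := by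
  rw [taylorCoeff, iteratedDeriv_mul hf hg, sum_div]
  refine sum_congr rfl fun i hi => ?_
  have := Nat.factorial_ne_zero n
  rw [Nat.cast_choose 𝕜 (mem_range_succ_iff.mp hi), taylorCoeff, taylorCoeff]
  field_simp

end TaylorCoeff

theorem sum_range_one_add_neg_one_pow_mul {R : Type*} [CommRing R] (f : ℕ → R) (n : ℕ) :
    ∑ j ∈ range n, (1 + (-1) ^ j) * f j = 2 * ∑ j ∈ range n with Even j, f j := by
  rw [sum_filter, mul_sum]
  refine sum_congr rfl fun j _ => ?_
  rcases Nat.even_or_odd j with hj | hj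
  · rw [hj.neg_one_pow, if_pos hj]; ring
  · rw [hj.neg_one_pow, if_neg (Nat.not_even_iff_odd.mpr hj)]; ring

theorem sum_range_filter_even {M : Type*} [AddCommMonoid M] (f : ℕ → M) (n : ℕ) :
    ∑ j ∈ range n with Even j, f j = ∑ m ∈ range n with 2 * m < n, f (2 * m) := by
  have himage : (range n).filter Even = ((range n).filter (2 * · < n)).image (2 * ·) := by
    ext j
    simp only [mem_filter, mem_range, mem_image, even_iff_two_dvd]
    constructor
    · rintro ⟨hj, m, rfl⟩
      exact ⟨m, ⟨by omega, hj⟩, rfl⟩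
    · rintro ⟨m, ⟨-, hm⟩, rfl⟩
      exact ⟨hm, dvd_mul_right 2 m⟩
  rw [himage, sum_image fun a _ b _ h => by simpa using h]

theorem qz_natCast_sub (k j : ℕ) (x : ℂ) :
    qz ((k : ℤ) - j) x = if j ≤ k then qpoly (k - j) x else 0 := by
  unfold qz
  split_ifs
  · congr; omega
  · omega
  · omega
  · rfl

def qGenFun (x t : ℂ) : ℂ := exp (-4 * t ^ 3 / 3 + t * x)

def muGenFun (x t : ℂ) : ℂ := exp (-t ^ 3 / 3 + t * x)

theorem qpoly_eq_taylorCoeff (k : ℕ) (x : ℂ) : qpoly k x = taylorCoeff (qGenFun x) 0 k := rfl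

theorem mu_eq_taylorCoeff (k : ℕ) (x : ℂ) : mu k x = taylorCoeff (muGenFun x) 0 k := rfl

theorem contDiff_qGenFun (x : ℂ) {n : WithTop ℕ∞} : ContDiff ℂ n (qGenFun x) := by
  unfold qGenFun; fun_prop

theorem contDiff_muGenFun (x : ℂ) {n : WithTop ℕ∞} : ContDiff ℂ n (muGenFun x) := by
  unfold muGenFun; fun_prop

theorem qGenFun_mul_self (x : ℂ) : qGenFun x * qGenFun x = fun t => muGenFun x (2 * t) := by
  funext t
  simp only [Pi.mul_apply, qGenFun, muGenFun, ← exp_add]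
  ring_nf

theorem qGenFun_neg_mul_qGenFun (x : ℂ) : (fun t => qGenFun x (-1 * t)) * qGenFun x = 1 := by
  funext t
  simp only [Pi.mul_apply, Pi.one_apply, qGenFun, ← exp_add]
  convert exp_zero using 2
  ring

theorem sum_qpoly_mul_qpoly (x : ℂ) (k : ℕ) :
    ∑ j ∈ range (k + 1), qpoly j x * qpoly (k - j) x = 2 ^ k * mu k x := by
  simp only [qpoly_eq_taylorCoeff, mu_eq_taylorCoeff]
  rw [← taylorCoeff_mul (contDiff_qGenFun x).contDiffAt (contDiff_qGenFun x).contDiffAt,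
    qGenFun_mul_self, taylorCoeff_comp_const_mul (contDiff_muGenFun x), mul_zero]

theorem sum_neg_one_pow_mul_qpoly_mul_qpoly (x : ℂ) (k : ℕ) :
    ∑ j ∈ range (k + 1), (-1) ^ j * qpoly j x * qpoly (k - j) x = if k = 0 then 1 else 0 := by
  have hneg (j : ℕ) : (-1) ^ j * qpoly j x = taylorCoeff (fun t => qGenFun x (-1 * t)) 0 j := by
    rw [taylorCoeff_comp_const_mul (contDiff_qGenFun x), mul_zero, qpoly_eq_taylorCoeff]
  simp only [hneg]
  simp only [qpoly_eq_taylorCoeff]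
  rw [← taylorCoeff_mul (f := fun t => qGenFun x (-1 * t)) ((contDiff_qGenFun x).comp (contDiff_const.mul contDiff_id)).contDiffAt
    (contDiff_qGenFun x).contDiffAt, qGenFun_neg_mul_qGenFun, Pi.one_def, taylorCoeff_const]

theorem sum_qz_mul_qpoly_eq_sum_even (x : ℂ) (k : ℕ) :
    ∑ m ∈ range (k + 1), qz ((k : ℤ) - 2 * m) x * qpoly (2 * m) x =
      ∑ j ∈ range (k + 1) with Even j, qpoly j x * qpoly (k - j) x := by
  rw [sum_range_filter_even, sum_filter]
  refine sum_congr rfl fun m _ => ?_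
  rw [show (k : ℤ) - 2 * m = (k : ℤ) - (2 * m : ℕ) by push_cast; ring, qz_natCast_sub]
  simp only [Nat.lt_succ_iff]
  split_ifs <;> ring

theorem q_mu_even_convolution (k : ℕ) (x : ℂ) :
    (2 : ℂ) ^ ((k : ℤ) - 1) * mu k x + (if k = 0 then (1 : ℂ) else 0) / 2 =
      ∑ m ∈ Finset.range (k + 1), qz ((k : ℤ) - 2 * m) x * qpoly (2 * m) x := by
  have hsum : ∑ j ∈ range (k + 1), (1 + (-1) ^ j) * (qpoly j x * qpoly (k - j) x) =
      2 ^ k * mu k x + if k = 0 then 1 else 0 := by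
    rw [← sum_qpoly_mul_qpoly, ← sum_neg_one_pow_mul_qpoly_mul_qpoly, ← sum_add_distrib]
    exact sum_congr rfl fun j _ => by ring
  rw [sum_range_one_add_neg_one_pow_mul] at hsum
  rw [sum_qz_mul_qpoly_eq_sum_even, zpow_sub₀ two_ne_zero, zpow_natCast, zpow_one]
  linear_combination -hsum / 2

end
end

section
/- Define the Vorob'ev–Yablonski polynomials by Q₀(x)=1, Q₁(x)=x and Q_{n+1}(x)·Q_{n-1}(x) = x·Q_n(x)² - 4(Q_n''(x)·Q_n(x) - Q_n'(x)²). Then for every n ≥ 0, Q_n is a monic polynomial of degree n(n+1)/2. -/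
/-!
Write `T f = X f² - 4 (f'' f - f'²)`, so that the recursion reads `Q (n+1) Q (n-1) = T (Q n)`.
For consecutive `q = Q n`, `r = Q (n+1)` two bilinear relations are carried along: Hirota's
equation `D²(q·r) = 0` and `q (T r)' - 2 q' T r = (2n+3) q r²`. The latter gives `q ∣ 2 q' T r`,
and since `q` is separable, `q ∣ T r`; so `t = T r / q` is a polynomial, and the same relation
becomes the Wronskian identity `q t' - q' t = (2n+3) r²`. The Hirota quotient `D²(q·r)/(q r)`
changes by `(W(q,t)/r²)' r²/(q t) = 0` when passing to `(r, t)`, which gives Hirota's equation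
for `(r, t)` and then the second relation with constant `2n+5`. Separability propagates since a
common factor of `r` and `t` divides `r'²`, and one of `t` and `t'` divides `r²`. Monicity and
the degree come from `T f` being monic of degree `2 deg f + 1`.
-/

open Polynomial

noncomputable section

section Identities

variable {R : Type*} [CommRing R]

/-- `vyRhs f = f² (X - 4 (log f)'')`. -/
def vyRhs (f : R[X]) : R[X] :=
  X * f ^ 2 - 4 * (derivative (derivative f) * f - derivative f ^ 2)

def hirotaD2 (a b : R[X]) : R[X] :=
  derivative (derivative a) * b - 2 * (derivative a * derivative b) + a * derivative (derivative b)

/-- `vyWronskian q r = q³ (vyRhs r / q²)'`. -/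
def vyWronskian (q r : R[X]) : R[X] :=
  q * derivative (vyRhs r) - 2 * derivative q * vyRhs r

/-- In logarithmic derivatives: `D²(r·t)/(r t) - D²(q·r)/(q r) = (W(q,t)/r²)' · r² / (q t)`. -/
theorem mul_hirotaD2_sub_mul_hirotaD2 (q r t : R[X]) :
    q * hirotaD2 r t - t * hirotaD2 q r =
      r * derivative (wronskian q t) - 2 * derivative r * wronskian q t := by
  simp only [hirotaD2, wronskian, derivative_mul, derivative_sub]
  ring

theorem mul_vyWronskian_add_mul_vyWronskian (r t : R[X]) :
    r * vyWronskian r t + t * vyWronskian t r - 2 * r ^ 2 * t ^ 2 =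
      -4 * (r * t * derivative (hirotaD2 r t) - derivative (r * t) * hirotaD2 r t) := by
  simp only [vyWronskian, vyRhs, hirotaD2, derivative_mul, derivative_sub, derivative_add,
    derivative_sq, derivative_X, derivative_ofNat, C_ofNat]
  ring

variable {q r t : R[X]}

theorem vyWronskian_eq_mul_wronskian (h : t * q = vyRhs r) :
    vyWronskian q r = q * wronskian q t := by
  rw [vyWronskian, wronskian, ← h, derivative_mul]
  ring

theorem vyWronskian_eq_neg_mul_wronskian (h : t * q = vyRhs r) :
    vyWronskian t r = -(t * wronskian q t) := by
  rw [vyWronskian, wronskian, ← h, derivative_mul]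
  ring

end Identities

section Degree

variable {R : Type*} [CommRing R] [Nontrivial R] {f : R[X]}

theorem natDegree_four_mul_lt_natDegree_X_mul_sq (hf : f.Monic) :
    (4 * (derivative (derivative f) * f - derivative f ^ 2)).natDegree < (X * f ^ 2).natDegree := by
  have h₁ := natDegree_derivative_le f
  have h₂ := natDegree_derivative_le (derivative f)
  have hle :
      (4 * (derivative (derivative f) * f - derivative f ^ 2)).natDegree ≤ 2 * f.natDegree :=
    calc _ ≤ (derivative (derivative f) * f - derivative f ^ 2).natDegree := by
          simpa only [natDegree_ofNat, zero_add] using natDegree_mul_le (p := (4 : R[X]))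
      _ ≤ max (derivative (derivative f) * f).natDegree (derivative f ^ 2).natDegree :=
          natDegree_sub_le _ _
      _ ≤ 2 * f.natDegree :=
          max_le (natDegree_mul_le.trans (by omega)) (natDegree_pow_le.trans (by omega))
  rw [monic_X.natDegree_mul (hf.pow 2), natDegree_X, hf.natDegree_pow]
  omega

theorem monic_vyRhs (hf : f.Monic) : (vyRhs f).Monic :=
  (monic_X.mul (hf.pow 2)).sub_of_left
    (degree_lt_degree (natDegree_four_mul_lt_natDegree_X_mul_sq hf))

theorem natDegree_vyRhs (hf : f.Monic) : (vyRhs f).natDegree = 2 * f.natDegree + 1 := by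
  rw [vyRhs, natDegree_sub_eq_left_of_natDegree_lt (natDegree_four_mul_lt_natDegree_X_mul_sq hf),
    monic_X.natDegree_mul (hf.pow 2), natDegree_X, hf.natDegree_pow]
  ring

end Degree

section Field

variable {K : Type*} [Field K] [CharZero K]

theorem isUnit_ofNat_polynomial (n : ℕ) [n.AtLeastTwo] : IsUnit (OfNat.ofNat n : K[X]) := by
  rw [← C_ofNat]
  exact isUnit_C.mpr (NeZero.ne _).isUnit

theorem Polynomial.Separable.isCoprime_vyRhs {r : K[X]} (hr : r.Separable) :
    IsCoprime r (vyRhs r) := by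
  have h : IsCoprime r (4 * derivative r ^ 2) :=
    (isCoprime_mul_unit_left_right (isUnit_ofNat_polynomial 4) _ _).mpr
      ((separable_def r).mp hr).pow_right
  have hT : vyRhs r = 4 * derivative r ^ 2 + r * (X * r - 4 * derivative (derivative r)) := by
    rw [vyRhs]
    ring
  rw [hT]
  exact h.add_mul_left_right _

/-- The data carried along the induction by two consecutive polynomials `q = Q n`, `r = Q (n+1)`,
with `c = 2n + 3`. -/
structure IsVYPair (c : K) (q r : K[X]) : Prop where
  separable_left : q.Separable
  separable_right : r.Separable
  hirotaD2_eq_zero : hirotaD2 q r = 0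
  vyWronskian_eq : vyWronskian q r = C c * q * r ^ 2

namespace IsVYPair

variable {c : K} {q r : K[X]}

theorem dvd_vyRhs (h : IsVYPair c q r) : q ∣ vyRhs r := by
  have hq : IsCoprime q (2 * derivative q) :=
    (isCoprime_mul_unit_left_right (isUnit_ofNat_polynomial 2) _ _).mpr h.separable_left
  refine hq.dvd_of_dvd_mul_left ⟨derivative (vyRhs r) - C c * r ^ 2, ?_⟩
  have hW := h.vyWronskian_eq
  rw [vyWronskian] at hW
  linear_combination -hW

theorem div_mul_cancel (h : IsVYPair c q r) : vyRhs r / q * q = vyRhs r := by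
  rw [mul_comm]
  exact EuclideanDomain.mul_div_cancel' h.separable_left.ne_zero h.dvd_vyRhs

theorem succ (h : IsVYPair c q r) (hc : c ≠ 0) : IsVYPair (c + 2) r (vyRhs r / q) := by
  set t := vyRhs r / q
  have hq₀ := h.separable_left.ne_zero
  have ht : t * q = vyRhs r := h.div_mul_cancel
  have hW : wronskian q t = C c * r ^ 2 := mul_left_cancel₀ hq₀ <| by
    rw [← vyWronskian_eq_mul_wronskian ht, h.vyWronskian_eq]
    ring
  have hH : hirotaD2 r t = 0 := mul_left_cancel₀ hq₀ <| by
    have key := mul_hirotaD2_sub_mul_hirotaD2 q r t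
    rw [h.hirotaD2_eq_zero, hW, derivative_C_mul, derivative_sq, C_ofNat] at key
    linear_combination key
  have hrt : IsCoprime r t := by
    have hT := h.separable_right.isCoprime_vyRhs
    rw [← ht] at hT
    exact hT.of_mul_right_left
  refine ⟨h.separable_right, ?_, hH, ?_⟩
  · have hT : IsCoprime t (wronskian q t) := by
      rw [hW]
      exact (isCoprime_mul_unit_left_right (isUnit_C.mpr hc.isUnit) _ _).mpr hrt.symm.pow_right
    rw [wronskian, IsCoprime.sub_mul_right_right_iff] at hT
    exact hT.of_mul_right_right
  · apply mul_left_cancel₀ h.separable_right.ne_zero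
    have key := mul_vyWronskian_add_mul_vyWronskian r t
    rw [hH, vyWronskian_eq_neg_mul_wronskian ht, hW, derivative_zero] at key
    rw [C_add, C_ofNat]
    linear_combination key

end IsVYPair

variable (K) in
def vyPoly : ℕ → K[X]
  | 0 => 1
  | 1 => X
  | n + 2 => vyRhs (vyPoly (n + 1)) / vyPoly n

theorem isVYPair_vyPoly (n : ℕ) : IsVYPair (2 * n + 3 : K) (vyPoly K n) (vyPoly K (n + 1)) := by
  induction n with
  | zero =>
    refine ⟨separable_one, separable_X, by simp [hirotaD2, vyPoly], ?_⟩
    simp only [vyWronskian, vyRhs, vyPoly, derivative_mul, derivative_sub, derivative_sq,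
      derivative_X, derivative_one, derivative_zero, derivative_ofNat, Nat.cast_zero, mul_zero,
      zero_add, C_ofNat]
    ring
  | succ n ih =>
    have hc : (2 * ((n + 1 : ℕ) : K) + 3) = 2 * n + 3 + 2 := by push_cast; ring
    rw [hc]
    exact ih.succ (by exact_mod_cast (by omega : 2 * n + 3 ≠ 0))

theorem vyPoly_add_two_mul (n : ℕ) : vyPoly K (n + 2) * vyPoly K n = vyRhs (vyPoly K (n + 1)) :=
  (isVYPair_vyPoly n).div_mul_cancel

theorem vyPoly_monic_natDegree (n : ℕ) :
    (vyPoly K n).Monic ∧ 2 * (vyPoly K n).natDegree = n * (n + 1) := by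
  induction n using Nat.twoStepInduction with
  | zero => simp [vyPoly]
  | one => simp [vyPoly]
  | more n ih₀ ih₁ =>
    have hrec := vyPoly_add_two_mul (K := K) n
    have hmonic : (vyPoly K (n + 2) * vyPoly K n).Monic := hrec ▸ monic_vyRhs ih₁.1
    have ht := ih₀.1.of_mul_monic_right hmonic
    have hdeg := natDegree_vyRhs ih₁.1
    rw [← hrec, ht.natDegree_mul ih₀.1] at hdeg
    exact ⟨ht, by nlinarith [ih₀.2, ih₁.2]⟩

end Field

/-- The Vorob'ev–Yablonski recursion is well defined in `ℂ[x]` (i.e. there is a sequence of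
polynomials satisfying it together with the initial data), and every polynomial sequence
satisfying it consists of monic polynomials with `deg Q_n = n(n+1)/2`. -/
theorem vorobev_yablonski_monic_degree :
    ∃ Q : ℕ → Polynomial ℂ,
      Q 0 = 1 ∧ Q 1 = X ∧
      (∀ n : ℕ, 1 ≤ n →
        Q (n + 1) * Q (n - 1) =
          X * (Q n) ^ 2 -
            4 * (derivative (derivative (Q n)) * Q n - (derivative (Q n)) ^ 2)) ∧
      (∀ n : ℕ, (Q n).Monic ∧ (Q n).natDegree = n * (n + 1) / 2) := by
  refine ⟨vyPoly ℂ, rfl, rfl, fun n hn => ?_, fun n => ?_⟩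
  · obtain ⟨k, rfl⟩ := Nat.exists_eq_add_of_le' hn
    exact vyPoly_add_two_mul k
  · obtain ⟨hmonic, hdeg⟩ := vyPoly_monic_natDegree (K := ℂ) n
    exact ⟨hmonic, by omega⟩
end
end
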